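/- For any simple loony endgame G, v(G) ≥ cv(G). -/
import Mathlib


/-- A component of a dots-and-boxes endgame: a chain or a loop, with an integer length. -/
inductive Comp : Type
  | chain (c : ℤ) : Comp
  | loop (l : ℤ) : Comp
  deriving DecidableEq

/-- The length (number of boxes) of a component. -/
def Comp.len : Comp → ℤ
  | .chain c => c
  | .loop l => l

/-- A simple loony endgame: a multiset of chains of length ≥ 3 and loops of even length ≥ 4. -/
def IsSimpleLoony (G : Multiset Comp) : Prop :=
  ∀ p ∈ G, match p with
    | .chain c => 3 ≤ c
    | .loop l => 4 ≤ l ∧ Even l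

/-- Fuel-indexed value function. -/
noncomputable def vAux : ℕ → Multiset Comp → ℤ
  | 0, _ => 0
  | n + 1, G =>
    if G = 0 then 0
    else sInf { x : ℤ | ∃ p ∈ G,
      x = match p with
        | Comp.chain c => c - 2 + |vAux n (G.erase p) - 2|
        | Comp.loop l => l - 4 + |vAux n (G.erase p) - 4| }

/-- The value of a simple loony endgame: 0 on the empty game; on a nonempty game, the
minimum over components of `c - 2 + |v(G∖{c}) - 2|` for a chain of length `c` and
`ℓ - 4 + |v(G∖{ℓ}) - 4|` for a loop of length `ℓ`. -/
noncomputable def v (G : Multiset Comp) : ℤ := vAux (Multiset.card G) G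

/-- The fully controlled value: Σ_chains (c - 4) + Σ_loops (ℓ - 8). -/
def fcv (G : Multiset Comp) : ℤ :=
  (G.map (fun p => match p with
    | Comp.chain c => c - 4
    | Comp.loop l => l - 8)).sum

/-- The terminal bonus. -/
noncomputable def tb (G : Multiset Comp) : ℤ :=
  open Classical in
  if G = 0 then 0
  else if (∃ c, 4 ≤ c ∧ Comp.chain c ∈ G) ∨ (∀ l, Comp.loop l ∉ G) then 4
  else if ∀ c, Comp.chain c ∉ G then 8
  else 6

/-- The controlled value. -/
noncomputable def cv (G : Multiset Comp) : ℤ := fcv G + tb G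

/-- auxiliary: the branch value for component `p` with subgame value `w`. -/
def tm (w : ℤ) : Comp → ℤ
  | .chain c => c - 2 + |w - 2|
  | .loop l => l - 4 + |w - 4|

lemma vAux_succ (n : ℕ) (G : Multiset Comp) (h : G ≠ 0) :
    vAux (n+1) G = sInf { x : ℤ | ∃ p ∈ G, x = tm (vAux n (G.erase p)) p } := by
  rw [vAux, if_neg h]
  congr 1

lemma vAux_stable : ∀ n, ∀ G : Multiset Comp, Multiset.card G ≤ n → vAux n G = v G := by
  intro n
  induction n using Nat.strong_induction_on with
  | _ n ih =>
    intro G hG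
    rcases n with _ | m
    · have h0 : G = 0 := by simpa using hG
      subst h0; rfl
    · by_cases h0 : G = 0
      · subst h0; simp [vAux, v]
      · have hcne : Multiset.card G ≠ 0 := by simpa [Multiset.card_eq_zero] using h0
        obtain ⟨k, hk⟩ := Nat.exists_eq_succ_of_ne_zero hcne
        have hv : v G = vAux (k+1) G := by rw [v, hk]
        rw [hv, vAux_succ m G h0, vAux_succ k G h0]
        have key : ∀ p ∈ G, vAux m (G.erase p) = vAux k (G.erase p) := by
          intro p hp
          have hce : Multiset.card (G.erase p) + 1 = Multiset.card G :=
            Multiset.card_erase_add_one hp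
          have h1 : vAux m (G.erase p) = v (G.erase p) :=
            ih m (Nat.lt_succ_self m) _ (by omega)
          have h2 : vAux k (G.erase p) = v (G.erase p) :=
            ih k (by omega) _ (by omega)
          rw [h1, h2]
        congr 1
        ext x
        constructor <;> rintro ⟨p, hp, rfl⟩
        · exact ⟨p, hp, by rw [key p hp]⟩
        · exact ⟨p, hp, by rw [key p hp]⟩

lemma v_zero : v 0 = 0 := rfl

lemma v_eq (G : Multiset Comp) (h : G ≠ 0) :
    v G = sInf { x : ℤ | ∃ p ∈ G, x = tm (v (G.erase p)) p } := by
  have hcne : Multiset.card G ≠ 0 := by simpa [Multiset.card_eq_zero] using h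
  obtain ⟨k, hk⟩ := Nat.exists_eq_succ_of_ne_zero hcne
  rw [v, hk, vAux_succ k G h]
  have key : ∀ p ∈ G, vAux k (G.erase p) = v (G.erase p) := by
    intro p hp
    have hce : Multiset.card (G.erase p) + 1 = Multiset.card G :=
      Multiset.card_erase_add_one hp
    exact vAux_stable k _ (by omega)
  congr 1
  ext x
  constructor <;> rintro ⟨p, hp, rfl⟩
  · exact ⟨p, hp, by rw [key p hp]⟩
  · exact ⟨p, hp, by rw [key p hp]⟩

lemma tm_nonneg {G : Multiset Comp} (hSL : IsSimpleLoony G) {p : Comp} (hp : p ∈ G)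
    (w : ℤ) : 0 ≤ tm w p := by
  have := hSL p hp
  cases p with
  | chain c =>
    simp only at this
    have := abs_nonneg (w - 2)
    simp only [tm]; linarith
  | loop l =>
    simp only at this
    have := abs_nonneg (w - 4)
    simp only [tm]; linarith

lemma v_nonneg {G : Multiset Comp} (hSL : IsSimpleLoony G) : 0 ≤ v G := by
  by_cases h0 : G = 0
  · subst h0; simp [v_zero]
  · rw [v_eq G h0]
    obtain ⟨p, hp⟩ := Multiset.exists_mem_of_ne_zero h0
    exact le_csInf ⟨tm (v (G.erase p)) p, p, hp, rfl⟩
      (by rintro b ⟨q, hq, rfl⟩; exact tm_nonneg hSL hq _)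

lemma v_le_tm {G : Multiset Comp} (hSL : IsSimpleLoony G) {p : Comp} (hp : p ∈ G) :
    v G ≤ tm (v (G.erase p)) p := by
  have h0 : G ≠ 0 := by rintro rfl; simp at hp
  rw [v_eq G h0]
  exact csInf_le ⟨0, by rintro b ⟨q, hq, rfl⟩; exact tm_nonneg hSL hq _⟩ ⟨p, hp, rfl⟩

lemma all3_simple {G : Multiset Comp} (h3 : ∀ p ∈ G, p = Comp.chain 3) :
    IsSimpleLoony G := by
  intro p hp
  rw [h3 p hp]

lemma v_le_three : ∀ G : Multiset Comp, G ≠ 0 → (∀ p ∈ G, p = Comp.chain 3) → v G ≤ 3 := by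
  intro G
  induction G using Multiset.strongInductionOn with
  | ih G ih =>
    intro h0 h3
    obtain ⟨p, hp⟩ := Multiset.exists_mem_of_ne_zero h0
    have hSL := all3_simple h3
    have hle := v_le_tm hSL hp
    have hp3 := h3 p hp
    subst hp3
    simp only [tm] at hle
    by_cases hG' : G.erase (Comp.chain 3) = 0
    · rw [hG', v_zero] at hle
      norm_num at hle
      linarith
    · have hlt : G.erase (Comp.chain 3) < G := Multiset.erase_lt.mpr hp
      have h3' : ∀ q ∈ G.erase (Comp.chain 3), q = Comp.chain 3 :=
        fun q hq => h3 q (Multiset.mem_of_mem_erase hq)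
      have hub := ih _ hlt hG' h3'
      have hlb := v_nonneg (all3_simple h3')
      have : |v (G.erase (Comp.chain 3)) - 2| ≤ 2 := abs_le.mpr ⟨by linarith, by linarith⟩
      linarith

/-- the fcv-contribution of a single component. -/
def fc (p : Comp) : ℤ := match p with
  | .chain c => c - 4
  | .loop l => l - 8

lemma fcv_cons (p : Comp) (G : Multiset Comp) : fcv (p ::ₘ G) = fc p + fcv G := by
  simp only [fcv, Multiset.map_cons, Multiset.sum_cons]
  cases p <;> rfl

lemma fcv_erase {G : Multiset Comp} {p : Comp} (hp : p ∈ G) :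
    fcv G = fc p + fcv (G.erase p) := by
  conv_lhs => rw [← Multiset.cons_erase hp]
  exact fcv_cons p _

lemma fcv_zero : fcv 0 = 0 := rfl

lemma fcv_all3 {G : Multiset Comp} (h0 : G ≠ 0) (h3 : ∀ p ∈ G, p = Comp.chain 3) :
    fcv G ≤ -1 := by
  have hmap : fcv G = (G.map (fun _ => (-1 : ℤ))).sum := by
    unfold fcv
    congr 1
    refine Multiset.map_congr rfl ?_
    intro p hp
    rw [h3 p hp]
    rfl
  have hc : 1 ≤ (Multiset.card G : ℤ) := by
    have : 0 < Multiset.card G := Multiset.card_pos.mpr h0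
    exact_mod_cast this
  rw [hmap, Multiset.map_const', Multiset.sum_replicate, nsmul_eq_mul]
  linarith

lemma tb_zero : tb 0 = 0 := by rw [tb, if_pos rfl]

lemma tb_le_eight (G : Multiset Comp) : tb G ≤ 8 := by
  rw [tb]; split_ifs <;> norm_num

lemma tb_ge_four {G : Multiset Comp} (h0 : G ≠ 0) : 4 ≤ tb G := by
  rw [tb, if_neg h0]; split_ifs <;> norm_num
theorem stmt10 (G : Multiset Comp) (hG : IsSimpleLoony G) : cv G ≤ v G := by
  induction G using Multiset.strongInductionOn with
  | ih G ih =>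
    by_cases h0 : G = 0
    · subst h0
      rw [cv, fcv_zero, tb_zero, v_zero]
      norm_num
    · rw [v_eq G h0]
      obtain ⟨p₀, hp₀⟩ := Multiset.exists_mem_of_ne_zero h0
      refine le_csInf ⟨tm (v (G.erase p₀)) p₀, p₀, hp₀, rfl⟩ ?_
      rintro b ⟨p, hp, rfl⟩
      have hlt : G.erase p < G := Multiset.erase_lt.mpr hp
      have hSL' : IsSimpleLoony (G.erase p) :=
        fun q hq => hG q (Multiset.mem_of_mem_erase hq)
      have IH' : cv (G.erase p) ≤ v (G.erase p) := ih _ hlt hSL'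
      have hfcv := fcv_erase hp
      rw [cv] at IH' ⊢
      set G' := G.erase p with hG'def
      cases p with
      | chain c =>
        have hc : 3 ≤ c := hG _ hp
        simp only [tm, fc] at hfcv ⊢
        have habs : v G' - 2 ≤ |v G' - 2| := le_abs_self _
        by_cases hG'0 : G' = 0
        · rw [hG'0, v_zero] at habs ⊢
          rw [hG'0, fcv_zero] at hfcv
          have hGeq : G = Comp.chain c ::ₘ 0 := by
            rw [← Multiset.cons_erase hp, ← hG'def, hG'0]
          have htb : tb G = 4 := by
            rw [tb, if_neg h0, if_pos (Or.inr ?_)]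
            intro l hl
            rw [hGeq] at hl
            simp at hl
          rw [htb]
          have : |(0:ℤ) - 2| = 2 := by norm_num
          rw [this]
          linarith
        · have htb : tb G ≤ tb G' := by
            by_cases h1 : (∃ c', 4 ≤ c' ∧ Comp.chain c' ∈ G) ∨ (∀ l, Comp.loop l ∉ G)
            · rw [tb, if_neg h0, if_pos h1]
              exact tb_ge_four hG'0
            · push_neg at h1
              obtain ⟨hnc4, l, hl⟩ := h1
              have h2 : ¬ (∀ c', Comp.chain c' ∉ G) := fun h => h c hp
              rw [tb, if_neg h0, if_neg (by push_neg; exact ⟨hnc4, l, hl⟩), if_neg h2]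
              have hl' : Comp.loop l ∈ G' :=
                (Multiset.mem_erase_of_ne (by simp)).mpr hl
              rw [tb, if_neg hG'0, if_neg ?_]
              · split_ifs <;> norm_num
              · rintro (⟨c', hc', hc'mem⟩ | hnl)
                · exact hnc4 c' hc' (Multiset.mem_of_mem_erase hc'mem)
                · exact hnl l hl'
          linarith
      | loop l =>
        have hl4 : (4 : ℤ) ≤ l := (hG _ hp).1
        simp only [tm, fc] at hfcv ⊢
        have habs : v G' - 4 ≤ |v G' - 4| := le_abs_self _
        by_cases hG'0 : G' = 0
        · rw [hG'0, v_zero] at habs ⊢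
          rw [hG'0, fcv_zero] at hfcv
          have h8 := tb_le_eight G
          have : |(0:ℤ) - 4| = 4 := by norm_num
          rw [this]
          linarith
        · by_cases hloop : ∃ l', Comp.loop l' ∈ G'
          · have htb : tb G ≤ tb G' := by
              by_cases h1 : (∃ c', 4 ≤ c' ∧ Comp.chain c' ∈ G) ∨ (∀ l', Comp.loop l' ∉ G)
              · rw [tb, if_neg h0, if_pos h1]
                exact tb_ge_four hG'0
              · push_neg at h1
                obtain ⟨hnc4, hlex⟩ := h1
                have hnc4' : ¬ ((∃ c', 4 ≤ c' ∧ Comp.chain c' ∈ G') ∨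
                    (∀ l', Comp.loop l' ∉ G')) := by
                  rintro (⟨c', hc', hc'mem⟩ | hnl)
                  · exact hnc4 c' hc' (Multiset.mem_of_mem_erase hc'mem)
                  · obtain ⟨l', hl'⟩ := hloop; exact hnl l' hl'
                by_cases h2 : ∀ c', Comp.chain c' ∉ G
                · have h2' : ∀ c', Comp.chain c' ∉ G' :=
                    fun c' hc' => h2 c' (Multiset.mem_of_mem_erase hc')
                  rw [tb, if_neg h0, if_neg (by push_neg; exact ⟨hnc4, hlex⟩), if_pos h2,
                    tb, if_neg hG'0, if_neg hnc4', if_pos h2']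
                · push_neg at h2
                  obtain ⟨c', hc'⟩ := h2
                  have hc'' : Comp.chain c' ∈ G' :=
                    (Multiset.mem_erase_of_ne (by simp)).mpr hc'
                  have h2' : ¬ (∀ c'', Comp.chain c'' ∉ G') := fun h => h c' hc''
                  rw [tb, if_neg h0, if_neg (by push_neg; exact ⟨hnc4, hlex⟩),
                    if_neg (fun h => h c' hc'),
                    tb, if_neg hG'0, if_neg hnc4', if_neg h2']
            linarith
          · -- G' nonempty, no loops in G'
            push_neg at hloop
            by_cases h1 : ∃ c', 4 ≤ c' ∧ Comp.chain c' ∈ G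
            · have htbG : tb G = 4 := by rw [tb, if_neg h0, if_pos (Or.inl h1)]
              have htbG' : 4 ≤ tb G' := tb_ge_four hG'0
              linarith
            · push_neg at h1
              -- every component of G' is a 3-chain
              have h3' : ∀ q ∈ G', q = Comp.chain 3 := by
                intro q hq
                cases q with
                | chain c' =>
                  have hge : 3 ≤ c' := hG _ (Multiset.mem_of_mem_erase hq)
                  have hlt4 : ¬ (4 ≤ c') := fun h =>
                    h1 c' h (Multiset.mem_of_mem_erase hq)
                  have : c' = 3 := by omega
                  rw [this]
                | loop l' => exact absurd hq (hloop l')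
              have htbG : tb G = 6 := by
                have hn1 : ¬ ((∃ c', 4 ≤ c' ∧ Comp.chain c' ∈ G) ∨
                    (∀ l', Comp.loop l' ∉ G)) := by
                  rintro (⟨c', hc', hmem⟩ | hnl)
                  · exact (h1 c' hc') hmem
                  · exact hnl l hp
                obtain ⟨q, hq⟩ := Multiset.exists_mem_of_ne_zero hG'0
                have hq3 := h3' q hq
                subst hq3
                have h2 : ¬ (∀ c', Comp.chain c' ∉ G) :=
                  fun h => h 3 (Multiset.mem_of_mem_erase hq)
                rw [tb, if_neg h0, if_neg hn1, if_neg h2]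
              have hv3 : v G' ≤ 3 := v_le_three G' hG'0 h3'
              have hv0 : 0 ≤ v G' := v_nonneg (all3_simple h3')
              have hf : fcv G' ≤ -1 := fcv_all3 hG'0 h3'
              have habs2 : 4 - v G' ≤ |v G' - 4| := by
                rw [abs_sub_comm]; exact le_abs_self _
              rw [htbG]
              linarith
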